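/- arXiv:2405.02594 — 10 statements merged into one kernel-verified Lean document; each statement's English description precedes it below -/
import Mathlib

section
/- Let L > 0, let μ*, μ be real numbers with Δ := μ* − μ > 0, let ω ≥ 0, T_S ≥ 0 and N > 0 be real numbers, and let U, U^S, U*, U^{S*} be real numbers satisfying: (i) μ* ≤ min(U*, U^{S*}); (ii) U ≤ μ + 2·√(2L/N); (iii) U^S ≤ μ + 2·√(2L/(N + T_S)) + (T_S/(N + T_S))·ω. If N > 32·L/Δ² − T_S·(max(1 − ω/Δ, 0))², then min(U, U^S) < min(U*, U^{S*}). -/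
/-!
Write `Δ = μ* - μ`. If `N Δ² > 8L`, the online confidence width `2√(2L/N)` is below `Δ`, so
`U < μ* ≤ min(U*, U^{S*})`. Otherwise the hypothesis on `N` forces `T_S m² Δ² > 24L` for
`m = 1 - ω/Δ`, hence `0 < m ≤ 1` and `T_S > 3N`. Since
`Δ - T_S ω/(N + T_S) = Δ (N + T_S m)/(N + T_S)`, the warm-start width `2√(2L/(N + T_S))` is
below this margin because `(Δ T_S m)² = T_S · T_S m² Δ² > 24 L T_S > 8 L (N + T_S)`;
thus `U^S < μ*`.
-/

lemma two_mul_sqrt_two_mul_div_lt {L n c : ℝ} (hn : 0 < n) (hc : 0 < c)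
    (h : 8 * L < n * c ^ 2) : 2 * √(2 * L / n) < c := by
  have hsqrt : √(2 * L / n) < c / 2 := by
    rw [Real.sqrt_lt' (by positivity), div_lt_iff₀ hn]
    linarith
  linarith

lemma sub_div_add_mul_eq {Δ ω N TS : ℝ} (hΔ : Δ ≠ 0) (hNTS : N + TS ≠ 0) :
    Δ - TS / (N + TS) * ω = Δ * (N + TS * (1 - ω / Δ)) / (N + TS) := by
  field_simp
  ring

lemma eight_mul_mul_add_lt_sq {L Δ m N TS : ℝ} (hΔ : 0 < Δ) (hN : 0 < N) (hm0 : 0 < m)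
    (hm1 : m ≤ 1) (hoff : N * Δ ^ 2 ≤ 8 * L) (hTS : 24 * L < TS * m ^ 2 * Δ ^ 2) :
    8 * L * (N + TS) < (Δ * (N + TS * m)) ^ 2 := by
  have hNΔ : 0 < N * Δ ^ 2 := by positivity
  have hmΔ : 0 < m ^ 2 * Δ ^ 2 := by positivity
  have hL : 0 < L := by linarith
  have hTS_pos : 0 < TS := by nlinarith
  have hm2 : m ^ 2 * Δ ^ 2 ≤ Δ ^ 2 :=
    mul_le_of_le_one_left (by positivity) (pow_le_one₀ hm0.le hm1)
  have hN_lt : 3 * N < TS := by nlinarith [mul_le_mul_of_nonneg_left hm2 hTS_pos.le]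
  calc 8 * L * (N + TS) < TS * (24 * L) := by nlinarith
    _ < TS * (TS * m ^ 2 * Δ ^ 2) := mul_lt_mul_of_pos_left hTS hTS_pos
    _ = (Δ * (TS * m)) ^ 2 := by ring
    _ ≤ (Δ * (N + TS * m)) ^ 2 := by gcongr; linarith

lemma two_mul_sqrt_add_div_mul_lt {L Δ ω N TS : ℝ} (hΔ : 0 < Δ) (hω : 0 ≤ ω) (hN : 0 < N)
    (hTS : 0 ≤ TS) (hoff : N * Δ ^ 2 ≤ 8 * L)
    (hbig : 32 * L < (N + TS * max (1 - ω / Δ) 0 ^ 2) * Δ ^ 2) :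
    2 * √(2 * L / (N + TS)) + TS / (N + TS) * ω < Δ := by
  set m := 1 - ω / Δ
  have hm_le : m ≤ 1 := by have := div_nonneg hω hΔ.le; linarith
  have hm_pos : 0 < m := by
    by_contra! hm
    rw [max_eq_right hm] at hbig
    nlinarith [mul_pos hN (pow_pos hΔ 2)]
  rw [max_eq_left hm_pos.le] at hbig
  have hNTS : 0 < N + TS := by linarith
  have hmargin := sub_div_add_mul_eq (ω := ω) hΔ.ne' hNTS.ne'
  suffices 2 * √(2 * L / (N + TS)) < Δ * (N + TS * m) / (N + TS) by linarith
  refine two_mul_sqrt_two_mul_div_lt hNTS (by positivity) ?_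
  rw [div_pow, mul_div_assoc', sq (N + TS), mul_div_mul_left _ _ hNTS.ne', lt_div_iff₀ hNTS]
  exact eight_mul_mul_add_lt_sq hΔ hN hm_pos hm_le hoff (by linarith)

theorem minucb_elimination_general
    (L μstar μ ω TS N U US Ustar USstar : ℝ)
    (hΔ : 0 < μstar - μ) (hω : 0 ≤ ω) (hTS : 0 ≤ TS) (hN : 0 < N)
    (h1 : μstar ≤ min Ustar USstar)
    (h2 : U ≤ μ + 2 * Real.sqrt (2 * L / N))
    (h3 : US ≤ μ + 2 * Real.sqrt (2 * L / (N + TS)) + (TS / (N + TS)) * ω)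
    (hNbig : N > 32 * L / (μstar - μ) ^ 2
        - TS * (max (1 - ω / (μstar - μ)) 0) ^ 2) :
    min U US < min Ustar USstar := by
  have hbig : 32 * L < (N + TS * max (1 - ω / (μstar - μ)) 0 ^ 2) * (μstar - μ) ^ 2 := by
    rwa [gt_iff_lt, sub_lt_iff_lt_add, div_lt_iff₀ (by positivity)] at hNbig
  suffices U < μstar ∨ US < μstar by
    rcases this with hU | hUS
    · exact (min_le_left _ _).trans_lt (hU.trans_le h1)
    · exact (min_le_right _ _).trans_lt (hUS.trans_le h1)
  rcases lt_or_ge (8 * L) (N * (μstar - μ) ^ 2) with hon | hoff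
  · have := two_mul_sqrt_two_mul_div_lt hN hΔ hon
    left; linarith
  · have := two_mul_sqrt_add_div_mul_lt hΔ hω hN hTS hoff hbig
    right; linarith

/-- Deterministic core of the arm-elimination lemma for the MIN-UCB policy. -/
theorem minucb_elimination
    (L μstar μ ω TS N U US Ustar USstar : ℝ)
    (hL : 0 < L) (hΔ : 0 < μstar - μ) (hω : 0 ≤ ω) (hTS : 0 ≤ TS) (hN : 0 < N)
    (h1 : μstar ≤ min Ustar USstar)
    (h2 : U ≤ μ + 2 * Real.sqrt (2 * L / N))
    (h3 : US ≤ μ + 2 * Real.sqrt (2 * L / (N + TS)) + (TS / (N + TS)) * ω)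
    (hNbig : N > 32 * L / (μstar - μ) ^ 2
        - TS * (max (1 - ω / (μstar - μ)) 0) ^ 2) :
    min U US < min Ustar USstar :=
  minucb_elimination_general L μstar μ ω TS N U US Ustar USstar hΔ hω hTS hN h1 h2 h3 hNbig
end

section
/- Let L > 0, Δ > 0, 0 ≤ ω < Δ, T_S > 0 and N ≥ 0 be real numbers with T_S·(1 − ω/Δ)² ≥ 16·L/Δ². Then 2·√(2L/(N + T_S)) + (T_S/(N + T_S))·ω < Δ. -/
/-- Sub-case 1a inequality in the instance-dependent regret upper bound of MIN-UCB. -/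
theorem warm_start_radius_lt_gap
    (L Δ ω TS N : ℝ)
    (hL : 0 < L) (hΔ : 0 < Δ) (hω0 : 0 ≤ ω) (hωΔ : ω < Δ)
    (hTS : 0 < TS) (hN : 0 ≤ N)
    (h : TS * (1 - ω / Δ) ^ 2 ≥ 16 * L / Δ ^ 2) :
    2 * Real.sqrt (2 * L / (N + TS)) + (TS / (N + TS)) * ω < Δ := by
  have hS : 0 < N + TS := by linarith
  have hd : 0 < Δ - ω := by linarith
  have h16 : 16 * L ≤ TS * (Δ - ω) ^ 2 := by
    rw [ge_iff_le, div_le_iff₀ (by positivity : (0:ℝ) < Δ ^ 2)] at h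
    have he : (1 - ω / Δ) = (Δ - ω) / Δ := by field_simp
    rw [he, div_pow] at h
    have hΔ2 : Δ ^ 2 ≠ 0 := by positivity
    calc 16 * L ≤ TS * ((Δ - ω) ^ 2 / Δ ^ 2) * Δ ^ 2 := h
      _ = TS * (Δ - ω) ^ 2 := by field_simp
  have hsq : Real.sqrt (2 * L / (N + TS)) < (Δ - ω) / 2 := by
    rw [show ((Δ - ω) / 2) = Real.sqrt (((Δ - ω) / 2) ^ 2) from
      (Real.sqrt_sq (by positivity)).symm]
    apply Real.sqrt_lt_sqrt (by positivity)
    rw [div_lt_iff₀ hS]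
    nlinarith
  have hfrac : TS / (N + TS) * ω ≤ ω := by
    have h1 : TS / (N + TS) ≤ 1 := by rw [div_le_one hS]; linarith
    nlinarith
  linarith
end

section
/- Let 𝒜 be a nonempty finite set, T_S : 𝒜 → ℝ with T_S(a) ≥ 0 for all a, and T > 0 a real number. Suppose (τ*, n*) is feasible for the LP and optimal (i.e., τ ≤ τ* for every feasible (τ, n)). Then for every a ∈ 𝒜, n*(a) = max(τ* − T_S(a), 0). -/
/-- `(τ, n)` is a feasible pair for the LP with offline sample sizes `TS` and budget `T`. -/
def LPfeasible {α : Type*} [Fintype α] (TS : α → ℝ) (T : ℝ) (τ : ℝ) (n : α → ℝ) : Prop :=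
  0 ≤ τ ∧ (∀ a, 0 ≤ n a) ∧ (∑ a, n a) = T ∧ ∀ a, τ ≤ TS a + n a

/-- At an optimal LP solution, `n*(a) = max (τ* - TS a) 0` for every arm. -/
theorem lp_optimal_solution_form
    {α : Type*} [Fintype α] [Nonempty α]
    (TS : α → ℝ) (hTS : ∀ a, 0 ≤ TS a) (T : ℝ) (hT : 0 < T)
    (τstar : ℝ) (nstar : α → ℝ)
    (hfeas : LPfeasible TS T τstar nstar)
    (hopt : ∀ τ n, LPfeasible TS T τ n → τ ≤ τstar) :
    ∀ a, nstar a = max (τstar - TS a) 0 := by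
  classical
  obtain ⟨hτ0, hn0, hsum, hcon⟩ := hfeas
  intro a
  have hge : max (τstar - TS a) 0 ≤ nstar a := by
    apply max_le
    · linarith [hcon a]
    · exact hn0 a
  rcases le_or_gt (nstar a) (max (τstar - TS a) 0) with h | h
  · exact le_antisymm h hge
  · exfalso
    set k : ℝ := (Fintype.card α : ℝ) with hk
    have hkpos : 0 < k := by
      have := Fintype.card_pos (α := α)
      positivity
    have hs1 : 0 < nstar a := lt_of_le_of_lt (le_max_right _ _) h
    have hs2 : 0 < TS a + nstar a - τstar := by
      have := lt_of_le_of_lt (le_max_left _ _) h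
      linarith
    set δ : ℝ := min (nstar a) (TS a + nstar a - τstar) / k with hδ
    have hδpos : 0 < δ := by
      apply div_pos (lt_min hs1 hs2) hkpos
    have hkδ1 : k * δ ≤ nstar a := by
      rw [hδ, mul_div_cancel₀ _ (ne_of_gt hkpos)]
      exact min_le_left _ _
    have hkδ2 : k * δ ≤ TS a + nstar a - τstar := by
      rw [hδ, mul_div_cancel₀ _ (ne_of_gt hkpos)]
      exact min_le_right _ _
    set n' : α → ℝ := fun b => nstar b + δ - (if b = a then k * δ else 0) with hn'
    have hfeas' : LPfeasible TS T (τstar + δ) n' := by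
      refine ⟨by linarith, ?_, ?_, ?_⟩
      · intro b
        simp only [hn']
        by_cases hb : b = a
        · subst hb; simp only [if_pos rfl, if_true]; linarith
        · simp only [if_neg hb]; have := hn0 b; linarith
      · simp only [hn']
        rw [Finset.sum_sub_distrib, Finset.sum_add_distrib, hsum,
          Finset.sum_ite_eq' Finset.univ a (fun _ => k * δ)]
        simp [Finset.card_univ, ← hk]
      · intro b
        simp only [hn']
        by_cases hb : b = a
        · subst hb; simp only [if_pos rfl, if_true]; linarith
        · simp only [if_neg hb]; have := hcon b; linarith
    have := hopt _ _ hfeas'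
    linarith
end

section
/- Let 𝒜 be a nonempty finite set, T_S : 𝒜 → ℕ, T ∈ ℕ, and ρ ∈ (0, 1]. Suppose (τ*, n*) is an optimal solution for the LP (with T_S regarded as real-valued and budget T). Suppose N* : 𝒜 → ℕ satisfies ∑_{a∈𝒜} N*(a) = T and maximizes the objective F(N) := ∑_{a∈𝒜} ∑_{k=1}^{N(a)} (k + T_S(a))^{−ρ/2} over all N : 𝒜 → ℕ with ∑_{a∈𝒜} N(a) = T. Then for every a ∈ 𝒜, N*(a) ≤ max(⌈τ*⌉ − T_S(a), 0). -/
/-!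
Suppose `N*(a) > max (⌈τ*⌉ - T_S(a)) 0`, so arm `a` reaches level `T_S(a) + N*(a) ≥ τ* + 1`.
Viewed as a fractional allocation, `N*` cannot keep every arm at level `≥ τ*`: taking a little
mass off the overfull arm `a` and spreading it over all arms would raise the LP value above the
optimum `τ*`. Hence some arm `b` sits at level `< τ*`, at least two below `a`. Since the marginal
gain `x ↦ x^(-ρ/2)` is strictly decreasing, moving one sample from `a` to `b` strictly increases
the objective, contradicting the maximality of `N*`.
-/

open Finset

theorem LPfeasible.exists_gt {α : Type*} [Fintype α] {TS : α → ℝ} {T τ : ℝ} {n : α → ℝ}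
    (h : LPfeasible TS T τ n) {a : α} {δ : ℝ} (hδ : 0 < δ) (hδa : δ ≤ n a)
    (hslack : τ + δ ≤ TS a + n a) : ∃ τ' > τ, ∃ n', LPfeasible TS T τ' n' := by
  classical
  obtain ⟨hτ, hn, hsum, hcov⟩ := h
  have hm : (0 : ℝ) < Fintype.card α := by exact_mod_cast Fintype.card_pos_iff.mpr ⟨a⟩
  set ε := δ / Fintype.card α
  have hε : 0 < ε := by positivity
  -- spread `δ` evenly over all arms and withdraw it from `a`
  refine ⟨τ + ε, by linarith, fun c => n c + ε - (Pi.single a δ : α → ℝ) c, by linarith,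
    fun c => ?_, ?_, fun c => ?_⟩
  · rcases eq_or_ne c a with rfl | hca
    · simp only [Pi.single_eq_same]; linarith
    · simp only [Pi.single_eq_of_ne hca]; linarith [hn c]
  · simp only [sum_sub_distrib, sum_add_distrib, sum_pi_single', mem_univ, if_true, sum_const,
      card_univ, nsmul_eq_mul, hsum, ε]
    field_simp
    ring
  · rcases eq_or_ne c a with rfl | hca
    · simp only [Pi.single_eq_same]; linarith
    · simp only [Pi.single_eq_of_ne hca]; linarith [hcov c]

theorem sum_apply_update_add {α β γ : Type*} [Fintype α] [DecidableEq α] [AddCommMonoid γ]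
    (g : α → β → γ) (M : α → β) (c : α) (v : β) :
    ∑ x, g x (Function.update M c v x) + g c (M c) = ∑ x, g x (M x) + g c v := by
  simp_rw [Function.apply_update g]
  rw [sum_update_of_mem (mem_univ c), ← add_sum_erase univ _ (mem_univ c),
    sdiff_singleton_eq_erase]
  abel

section Allocation

variable {α : Type*} [Fintype α]

/-- The objective `F(N)` of the integer program, with marginal gain `f` in place of
`x ↦ x ^ (-ρ/2)`. -/
def allocValue (f : ℝ → ℝ) (TS N : α → ℕ) : ℝ :=
  ∑ a, ∑ k ∈ Icc 1 (N a), f (k + TS a)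

theorem allocValue_update_succ [DecidableEq α] (f : ℝ → ℝ) (TS M : α → ℕ) (c : α) :
    allocValue f TS (Function.update M c (M c + 1)) =
      allocValue f TS M + f ((M c + 1 : ℕ) + TS c) := by
  have := sum_apply_update_add (fun a (n : ℕ) => ∑ k ∈ Icc 1 n, f ((k : ℝ) + TS a)) M c (M c + 1)
  rw [sum_Icc_succ_top (by omega)] at this
  unfold allocValue
  linarith

theorem sum_update_succ [DecidableEq α] (M : α → ℕ) (c : α) :
    ∑ a, Function.update M c (M c + 1) a = ∑ a, M a + 1 := by
  have := sum_apply_update_add (fun _ n => n) M c (M c + 1)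
  omega

theorem le_add_one_of_forall_allocValue_le {f : ℝ → ℝ} (hf : StrictAntiOn f (Set.Ioi 0))
    {TS N : α → ℕ}
    (hN : ∀ N' : α → ℕ, ∑ a, N' a = ∑ a, N a → allocValue f TS N' ≤ allocValue f TS N)
    {a : α} (ha : 0 < N a) (b : α) : TS a + N a ≤ TS b + N b + 1 := by
  classical
  by_contra! hlt
  have hab : a ≠ b := by rintro rfl; omega
  set M := Function.update N a (N a - 1)
  have hMa : M a + 1 = N a := by simp only [M, Function.update_self]; omega
  have hMb : M b = N b := Function.update_of_ne hab.symm _ _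
  have hN_eq : Function.update M a (M a + 1) = N := by
    simp only [hMa, M, Function.update_idem, Function.update_eq_self]
  have hvalN := allocValue_update_succ f TS M a
  rw [hN_eq, hMa] at hvalN
  have hvalN' := allocValue_update_succ f TS M b
  have hsum : ∑ c, Function.update M b (M b + 1) c = ∑ c, N c := by
    rw [← hN_eq, sum_update_succ, sum_update_succ]
  have hgain : f (N a + TS a) < f ((M b + 1 : ℕ) + TS b) :=
    hf (by simp only [Set.mem_Ioi]; positivity) (by simp only [Set.mem_Ioi]; positivity)
      (by push_cast; exact_mod_cast (by omega : M b + 1 + TS b < N a + TS a))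
  linarith [hN _ hsum]

end Allocation

theorem ip_maximizer_bounded_by_lp_general
    {α : Type*} [Fintype α]
    (TS : α → ℕ) (T : ℕ) (ρ : ℝ) (hρ0 : 0 < ρ)
    (τstar : ℝ) (nstar : α → ℝ)
    (hfeas : LPfeasible (fun a => (TS a : ℝ)) (T : ℝ) τstar nstar)
    (hopt : ∀ τ n, LPfeasible (fun a => (TS a : ℝ)) (T : ℝ) τ n → τ ≤ τstar)
    (Nstar : α → ℕ) (hNsum : ∑ a, Nstar a = T)
    (hNmax : ∀ N : α → ℕ, ∑ a, N a = T →
      ∑ a, ∑ k ∈ Finset.Icc 1 (N a), ((k : ℝ) + (TS a : ℝ)) ^ (-(ρ / 2)) ≤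
        ∑ a, ∑ k ∈ Finset.Icc 1 (Nstar a), ((k : ℝ) + (TS a : ℝ)) ^ (-(ρ / 2))) :
    ∀ a, (Nstar a : ℤ) ≤ max (⌈τstar⌉ - (TS a : ℤ)) 0 := by
  intro a
  by_contra! hgt
  obtain ⟨hover, hpos⟩ := max_lt_iff.mp hgt
  have hslack : τstar + 1 ≤ TS a + Nstar a := by
    have : ((⌈τstar⌉ + 1 : ℤ) : ℝ) ≤ ((TS a + Nstar a : ℤ) : ℝ) := by exact_mod_cast (by omega)
    push_cast at this
    linarith [Int.le_ceil τstar]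
  obtain ⟨b, hb⟩ : ∃ b, (TS b : ℝ) + Nstar b < τstar := by
    by_contra! hcov
    have hfeasN : LPfeasible (fun c => (TS c : ℝ)) T τstar (fun c => Nstar c) :=
      ⟨hfeas.1, fun c => by positivity, by beta_reduce; exact_mod_cast hNsum, hcov⟩
    obtain ⟨τ', hτ', n', hfeas'⟩ := hfeasN.exists_gt one_pos (by exact_mod_cast hpos) hslack
    linarith [hopt τ' n' hfeas']
  have hb' : (TS b : ℤ) + Nstar b < ⌈τstar⌉ := Int.lt_ceil.mpr (by exact_mod_cast hb)
  have hbalance := le_add_one_of_forall_allocValue_le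
    (Real.strictAntiOn_rpow_Ioi_of_exponent_neg (by linarith : -(ρ / 2) < 0))
    (fun N hN => hNmax N (hN.trans hNsum)) (by omega : 0 < Nstar a) b
  omega

/-- Any integral maximizer of `N ↦ ∑ a, ∑_{k=1}^{N a} (k + TS a)^{-ρ/2}` subject to
`∑ a, N a = T` satisfies `N*(a) ≤ max (⌈τ*⌉ - TS a) 0` for every arm `a`, where `τ*` is the
optimum of the LP. -/
theorem ip_maximizer_bounded_by_lp
    {α : Type*} [Fintype α] [Nonempty α]
    (TS : α → ℕ) (T : ℕ) (ρ : ℝ) (hρ0 : 0 < ρ) (hρ1 : ρ ≤ 1)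
    (τstar : ℝ) (nstar : α → ℝ)
    (hfeas : LPfeasible (fun a => (TS a : ℝ)) (T : ℝ) τstar nstar)
    (hopt : ∀ τ n, LPfeasible (fun a => (TS a : ℝ)) (T : ℝ) τ n → τ ≤ τstar)
    (Nstar : α → ℕ) (hNsum : ∑ a, Nstar a = T)
    (hNmax : ∀ N : α → ℕ, ∑ a, N a = T →
      ∑ a, ∑ k ∈ Finset.Icc 1 (N a), ((k : ℝ) + (TS a : ℝ)) ^ (-(ρ / 2)) ≤
        ∑ a, ∑ k ∈ Finset.Icc 1 (Nstar a), ((k : ℝ) + (TS a : ℝ)) ^ (-(ρ / 2))) :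
    ∀ a, (Nstar a : ℤ) ≤ max (⌈τstar⌉ - (TS a : ℤ)) 0 :=
  ip_maximizer_bounded_by_lp_general TS T ρ hρ0 τstar nstar hfeas hopt Nstar hNsum hNmax
end

section
/- Let 𝒜 be a finite set with |𝒜| = K where 2 ≤ K, let T ∈ ℕ with K ≤ T, and let T_S : 𝒜 → ℕ. Suppose (τ*, n*) is an optimal solution for the LP (with T_S regarded as real-valued and budget T). Then for every N : 𝒜 → ℕ with ∑_{a∈𝒜} N(a) = T, one has ∑_{a∈𝒜} ∑_{k=1}^{N(a)} 1/√(k + T_S(a)) ≤ 8·T/√τ*. -/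
open Real Finset

lemma one_div_sqrt_add_one_le {x : ℝ} (hx : 0 ≤ x) :
    1 / √(x + 1) ≤ 2 * (√(x + 1) - √x) := by
  have hpos : 0 < √(x + 1) := sqrt_pos.mpr (by linarith)
  rw [div_le_iff₀ hpos]
  nlinarith [sq_nonneg (√(x + 1) - √x), sq_sqrt hx, sq_sqrt (by linarith : 0 ≤ x + 1)]

lemma sum_Icc_one_div_sqrt_add_le {S : ℝ} (hS : 0 ≤ S) (N : ℕ) :
    ∑ k ∈ Icc 1 N, 1 / √((k : ℝ) + S) ≤ 2 * (√((N : ℝ) + S) - √S) := by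
  induction N with
  | zero => simp
  | succ N ih =>
    rw [sum_Icc_succ_top (by omega)]
    have step := one_div_sqrt_add_one_le (by positivity : 0 ≤ (N : ℝ) + S)
    rw [show (N : ℝ) + S + 1 = ((N + 1 : ℕ) : ℝ) + S by push_cast; ring] at step
    linarith

lemma sqrt_add_le_sqrt_add_sqrt {x y : ℝ} (hx : 0 ≤ x) (hy : 0 ≤ y) : √(x + y) ≤ √x + √y := by
  rw [sqrt_le_left (by positivity)]
  nlinarith [sq_sqrt hx, sq_sqrt hy, mul_nonneg (sqrt_nonneg x) (sqrt_nonneg y)]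

lemma sqrt_mul_sqrt_add_sub_sqrt_le {S n N τ : ℝ} (hS : 0 ≤ S) (hn : 0 ≤ n) (hN : 0 ≤ N)
    (hτ : τ ≤ S + n) : √τ * (√(N + S) - √S) ≤ N + n := by
  have hgap : 0 ≤ √(N + S) - √S := sub_nonneg.mpr (sqrt_le_sqrt (by linarith))
  have hτ' : √τ ≤ √S + √n :=
    (sqrt_le_sqrt hτ).trans (sqrt_add_le_sqrt_add_sqrt hS hn)
  -- with `d = √(N + S) - √S`: `d √n ≤ d² / 4 + n` and `d ≤ √(N + S)`
  nlinarith [mul_le_mul_of_nonneg_left hτ' hgap, sq_sqrt hS, sq_sqrt hn,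
    sq_sqrt (by linarith : 0 ≤ N + S), sq_nonneg ((√(N + S) - √S) / 2 - √n), sqrt_nonneg S]

lemma sqrt_mul_sum_Icc_one_div_sqrt_add_le {S n τ : ℝ} (hS : 0 ≤ S) (hn : 0 ≤ n)
    (hτ : τ ≤ S + n) (N : ℕ) : √τ * ∑ k ∈ Icc 1 N, 1 / √((k : ℝ) + S) ≤ 2 * (N + n) := by
  calc √τ * ∑ k ∈ Icc 1 N, 1 / √((k : ℝ) + S)
      ≤ √τ * (2 * (√((N : ℝ) + S) - √S)) :=
        mul_le_mul_of_nonneg_left (sum_Icc_one_div_sqrt_add_le hS N) (sqrt_nonneg τ)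
    _ ≤ 2 * (N + n) := by
        linarith [sqrt_mul_sqrt_add_sub_sqrt_le hS hn (Nat.cast_nonneg N) hτ]

namespace LPfeasible

variable {α : Type*} [Fintype α] {TS : α → ℝ} {T τ : ℝ} {n : α → ℝ}

lemma uniform (hα : 0 < Fintype.card α) (hT : 0 ≤ T) (hTS : ∀ a, 0 ≤ TS a) :
    LPfeasible TS T (T / Fintype.card α) (fun _ => T / Fintype.card α) := by
  refine ⟨by positivity, fun _ => by positivity, ?_, fun a => le_add_of_nonneg_left (hTS a)⟩
  rw [sum_const, card_univ, nsmul_eq_mul]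
  field_simp

lemma sqrt_mul_sum_radii_le (h : LPfeasible TS T τ n) (hTS : ∀ a, 0 ≤ TS a) (N : α → ℕ)
    (hN : ∑ a, (N a : ℝ) = T) :
    √τ * ∑ a, ∑ k ∈ Icc 1 (N a), 1 / √((k : ℝ) + TS a) ≤ 4 * T := by
  obtain ⟨-, hn, hsum, hτ⟩ := h
  calc √τ * ∑ a, ∑ k ∈ Icc 1 (N a), 1 / √((k : ℝ) + TS a)
      ≤ ∑ a, 2 * ((N a : ℝ) + n a) := by
        rw [mul_sum]
        exact sum_le_sum fun a _ =>
          sqrt_mul_sum_Icc_one_div_sqrt_add_le (hTS a) (hn a) (hτ a) (N a)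
    _ = 4 * T := by
        rw [← mul_sum, sum_add_distrib, hN, hsum]
        ring

end LPfeasible

/-- Sum of warm-start confidence radii along any realization of arm pull counts is at most
`8 T / √τ*`. -/
theorem warm_start_radii_sum_bound
    {α : Type*} [Fintype α]
    (K : ℕ) (hK : Fintype.card α = K) (h2K : 2 ≤ K)
    (T : ℕ) (hKT : K ≤ T) (TS : α → ℕ)
    (τstar : ℝ) (nstar : α → ℝ)
    (hfeas : LPfeasible (fun a => (TS a : ℝ)) (T : ℝ) τstar nstar)
    (hopt : ∀ τ n, LPfeasible (fun a => (TS a : ℝ)) (T : ℝ) τ n → τ ≤ τstar) :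
    ∀ N : α → ℕ, ∑ a, N a = T →
      ∑ a, ∑ k ∈ Finset.Icc 1 (N a), 1 / Real.sqrt ((k : ℝ) + (TS a : ℝ)) ≤
        8 * (T : ℝ) / Real.sqrt τstar := by
  intro N hN
  have hTS : ∀ a, (0 : ℝ) ≤ TS a := fun a => Nat.cast_nonneg _
  have hτ : (T : ℝ) / K ≤ τstar := by
    have := hopt _ _ (LPfeasible.uniform (by omega) (Nat.cast_nonneg T) hTS)
    rwa [hK] at this
  have hTK : (0 : ℝ) < T / K := div_pos (by norm_cast; omega) (by norm_cast; omega)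
  have hτpos : 0 < √τstar := sqrt_pos.mpr (hTK.trans_le hτ)
  have hbound := hfeas.sqrt_mul_sum_radii_le hTS N (by exact_mod_cast hN)
  rw [le_div_iff₀ hτpos]
  nlinarith [Nat.cast_nonneg (α := ℝ) T]
end

section
/- Let 𝒜 be a finite set with |𝒜| = K where 2 ≤ K, let T ∈ ℕ with K ≤ T, let T_S : 𝒜 → ℕ, and let ρ ∈ (0, 1]. Suppose (τ*, n*) is an optimal solution for the LP (with T_S regarded as real-valued and budget T). Then for every N : 𝒜 → ℕ with ∑_{a∈𝒜} N(a) = T, one has ∑_{a∈𝒜} ∑_{k=1}^{N(a)} (k + T_S(a))^{−ρ/2} ≤ (2/(1 − ρ/2))·T·τ*^{−ρ/2}. -/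
open Finset

namespace Real

variable {p x y : ℝ}

lemma mul_rpow_sub_one_mul_le_rpow_sub_rpow (hp0 : 0 ≤ p) (hp1 : p ≤ 1) (hx : 0 < x)
    (hy : 0 ≤ y) : p * x ^ (p - 1) * (x - y) ≤ x ^ p - y ^ p := by
  have hs : -1 ≤ y / x - 1 := by linarith [div_nonneg hy hx.le]
  have hy_eq : y = x * (1 + (y / x - 1)) := by field_simp; ring
  have hbern := rpow_one_add_le_one_add_mul_self hs hp0 hp1
  have hxp : x ^ p = x ^ (p - 1) * x := by rw [rpow_sub_one hx.ne']; field_simp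
  calc p * x ^ (p - 1) * (x - y) = x ^ p - x ^ p * (1 + p * (y / x - 1)) := by
        rw [hxp]; field_simp; ring
    _ ≤ x ^ p - x ^ p * (1 + (y / x - 1)) ^ p := by gcongr
    _ = x ^ p - y ^ p := by rw [← mul_rpow hx.le (by linarith), ← hy_eq]

lemma rpow_sub_rpow_le_rpow_sub_one_mul (hp1 : p ≤ 1) (hy : 0 ≤ y) (hyx : y ≤ x) :
    x ^ p - y ^ p ≤ x ^ (p - 1) * (x - y) := by
  obtain rfl | hx := (hy.trans hyx).eq_or_lt
  · obtain rfl : y = 0 := le_antisymm hyx hy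
    simp
  have hxp : x ^ p = x ^ (p - 1) * x := by rw [rpow_sub_one hx.ne']; field_simp
  have hratio : y / x ≤ (y / x) ^ p :=
    self_le_rpow_of_le_one (div_nonneg hy hx.le) ((div_le_one hx).2 hyx) hp1
  have : x ^ (p - 1) * y ≤ y ^ p := by
    calc x ^ (p - 1) * y = x ^ p * (y / x) := by rw [hxp]; field_simp
      _ ≤ x ^ p * (y / x) ^ p := by gcongr
      _ = y ^ p := by rw [← mul_rpow hx.le (div_nonneg hy hx.le)]; field_simp
  rw [hxp]; linarith

variable {τ : ℝ}

lemma rpow_add_one_sub_one_le_add_min_rpow_sub (hp0 : 0 < p) (hp1 : p ≤ 1) (hτ : 0 < τ)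
    (hy : 0 ≤ y) : (y + 1) ^ (p - 1) ≤ τ ^ (p - 1) + (min (y + 1) τ ^ p - min y τ ^ p) / p := by
  rcases le_or_gt τ (y + 1) with hτy | hyτ
  · have hdecay : (y + 1) ^ (p - 1) ≤ τ ^ (p - 1) := rpow_le_rpow_of_nonpos hτ hτy (by linarith)
    have hmono : min y τ ^ p ≤ min (y + 1) τ ^ p :=
      rpow_le_rpow (le_min hy hτ.le) (min_le_min_right _ (by linarith)) hp0.le
    have : 0 ≤ (min (y + 1) τ ^ p - min y τ ^ p) / p := div_nonneg (by linarith) hp0.le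
    linarith
  · rw [min_eq_left hyτ.le, min_eq_left (by linarith)]
    have htangent : (y + 1) ^ (p - 1) ≤ ((y + 1) ^ p - y ^ p) / p := by
      rw [le_div_iff₀' hp0]
      simpa using mul_rpow_sub_one_mul_le_rpow_sub_rpow hp0.le hp1 (by linarith : 0 < y + 1) hy
    linarith [rpow_nonneg hτ.le (p - 1)]

lemma sum_Icc_rpow_sub_one_le {S : ℝ} (hp0 : 0 < p) (hp1 : p ≤ 1) (hτ : 0 < τ) (hS : 0 ≤ S)
    (N : ℕ) : ∑ k ∈ Icc 1 N, ((k : ℝ) + S) ^ (p - 1) ≤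
      N * τ ^ (p - 1) + (min (N + S) τ ^ p - min S τ ^ p) / p := by
  induction N with
  | zero => simp
  | succ N ih =>
    have hstep := rpow_add_one_sub_one_le_add_min_rpow_sub hp0 hp1 hτ (y := N + S) (by positivity)
    rw [sum_Icc_succ_top (by omega), Nat.cast_succ, add_right_comm]
    rw [sub_div] at ih hstep ⊢
    linarith

lemma sum_Icc_rpow_sub_one_le_of_le_add {S n : ℝ} (hp0 : 0 < p) (hp1 : p ≤ 1) (hτ : 0 < τ)
    (hS : 0 ≤ S) (hn : 0 ≤ n) (hτn : τ ≤ S + n) (N : ℕ) :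
    ∑ k ∈ Icc 1 N, ((k : ℝ) + S) ^ (p - 1) ≤ (N + n / p) * τ ^ (p - 1) := by
  have hclip : τ - n ≤ min S τ := le_min (by linarith) (by linarith)
  have hchord : τ ^ p - min S τ ^ p ≤ τ ^ (p - 1) * n :=
    (rpow_sub_rpow_le_rpow_sub_one_mul hp1 (le_min hS hτ.le) (min_le_right _ _)).trans
      (by gcongr; linarith)
  have htop : min (N + S) τ ^ p ≤ τ ^ p :=
    rpow_le_rpow (le_min (by positivity) hτ.le) (min_le_right _ _) hp0.le
  calc ∑ k ∈ Icc 1 N, ((k : ℝ) + S) ^ (p - 1)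
      ≤ N * τ ^ (p - 1) + (min (N + S) τ ^ p - min S τ ^ p) / p :=
        sum_Icc_rpow_sub_one_le hp0 hp1 hτ hS N
    _ ≤ N * τ ^ (p - 1) + τ ^ (p - 1) * n / p := by gcongr; linarith
    _ = (N + n / p) * τ ^ (p - 1) := by ring

end Real

lemma LPfeasible.uniform_s6 {α : Type*} [Fintype α] [Nonempty α] {TS : α → ℝ} {T : ℝ}
    (hTS : ∀ a, 0 ≤ TS a) (hT : 0 ≤ T) : LPfeasible TS T (T / Fintype.card α) (fun _ => T / Fintype.card α) := by
  refine ⟨by positivity, fun _ => by positivity, ?_, fun a => le_add_of_nonneg_left (hTS a)⟩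
  rw [sum_const, card_univ, nsmul_eq_mul]
  exact mul_div_cancel₀ T (by positivity)

lemma LPfeasible.pos_of_optimal {α : Type*} [Fintype α] {TS : α → ℝ} {T τ : ℝ} {n : α → ℝ}
    (hTS : ∀ a, 0 ≤ TS a) (hT : 0 < T) (hfeas : LPfeasible TS T τ n)
    (hopt : ∀ τ' n', LPfeasible TS T τ' n' → τ' ≤ τ) : 0 < τ := by
  have : Nonempty α := by
    by_contra h
    rw [not_nonempty_iff] at h
    simp [hfeas.2.2.1.symm] at hT
  exact (div_pos hT (by exact_mod_cast Fintype.card_pos)).trans_le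
    (hopt _ _ (LPfeasible.uniform_s6 hTS hT.le))

theorem comb_radii_sum_bound_general
    {α : Type*} [Fintype α]
    (T : ℕ) (TS : α → ℕ)
    (ρ : ℝ) (hρ0 : 0 < ρ) (hρ1 : ρ ≤ 1)
    (τstar : ℝ) (nstar : α → ℝ)
    (hfeas : LPfeasible (fun a => (TS a : ℝ)) (T : ℝ) τstar nstar)
    (hopt : ∀ τ n, LPfeasible (fun a => (TS a : ℝ)) (T : ℝ) τ n → τ ≤ τstar) :
    ∀ N : α → ℕ, ∑ a, N a = T →
      ∑ a, ∑ k ∈ Finset.Icc 1 (N a), ((k : ℝ) + (TS a : ℝ)) ^ (-(ρ / 2)) ≤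
        (2 / (1 - ρ / 2)) * (T : ℝ) * τstar ^ (-(ρ / 2)) := by
  intro N hN
  obtain rfl | hT := T.eq_zero_or_pos
  · simp_all [sum_eq_zero_iff]
  have hτ := hfeas.pos_of_optimal (fun a => (TS a).cast_nonneg) (by exact_mod_cast hT) hopt
  obtain ⟨-, hn, hnsum, hτn⟩ := hfeas
  have hp0 : 0 < 1 - ρ / 2 := by linarith
  have hp1 : 1 - ρ / 2 ≤ 1 := by linarith
  set p := 1 - ρ / 2
  rw [show -(ρ / 2) = p - 1 by ring]
  calc ∑ a, ∑ k ∈ Icc 1 (N a), ((k : ℝ) + TS a) ^ (p - 1)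
      ≤ ∑ a, (N a + nstar a / p) * τstar ^ (p - 1) :=
        sum_le_sum fun a _ => Real.sum_Icc_rpow_sub_one_le_of_le_add hp0 hp1 hτ
          (TS a).cast_nonneg (hn a) (hτn a) (N a)
    _ = (T + T / p) * τstar ^ (p - 1) := by
        rw [← sum_mul, sum_add_distrib, ← sum_div, hnsum, ← Nat.cast_sum, hN]
    _ ≤ 2 / p * T * τstar ^ (p - 1) := by
        rw [show 2 / p * T = T / p + T / p by ring]
        gcongr
        exact le_div_self T.cast_nonneg hp0 hp1

/-- Key combinatorial step in the instance-independent regret upper bound of MIN-COMB-UCB. -/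
theorem comb_radii_sum_bound
    {α : Type*} [Fintype α]
    (K : ℕ) (hK : Fintype.card α = K) (h2K : 2 ≤ K)
    (T : ℕ) (hKT : K ≤ T) (TS : α → ℕ)
    (ρ : ℝ) (hρ0 : 0 < ρ) (hρ1 : ρ ≤ 1)
    (τstar : ℝ) (nstar : α → ℝ)
    (hfeas : LPfeasible (fun a => (TS a : ℝ)) (T : ℝ) τstar nstar)
    (hopt : ∀ τ n, LPfeasible (fun a => (TS a : ℝ)) (T : ℝ) τ n → τ ≤ τstar) :
    ∀ N : α → ℕ, ∑ a, N a = T →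
      ∑ a, ∑ k ∈ Finset.Icc 1 (N a), ((k : ℝ) + (TS a : ℝ)) ^ (-(ρ / 2)) ≤
        (2 / (1 - ρ / 2)) * (T : ℝ) * τstar ^ (-(ρ / 2)) :=
  comb_radii_sum_bound_general T TS ρ hρ0 hρ1 τstar nstar hfeas hopt
end

section
/- Let 𝒜 be a finite set with |𝒜| = K, let 𝒜₀ ⊆ 𝒜 with |𝒜₀| = K₀ where 0 < K₀ < K, let c > 0 and T > 0 be real numbers, and define T_S(a) = c for a ∈ 𝒜₀ and T_S(a) = 0 for a ∈ 𝒜 \ 𝒜₀. Then the greatest element of the set {τ ∈ ℝ : there exists n : 𝒜 → ℝ such that (τ, n) is feasible for the LP} equals T/(K − K₀) if c·(K − K₀) > T, and equals (T + c·K₀)/K otherwise. -/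
/-!
Filling every arm up to level `τ`, i.e. `n a = max (τ - T_S a) 0`, is feasible when this uses up
exactly the budget `T`. Conversely, summing `τ ≤ T_S a + n a` over any set `s` of arms gives
`|s| τ ≤ ∑_{a ∈ s} T_S a + T`, so a level meeting this bound with equality for some nonempty `s`
is optimal. In the two-group case `s` is the set of arms without offline samples when the
filling level stays below `c`, and all arms otherwise.
-/

section LP

variable {α : Type*} [Fintype α] {TS : α → ℝ} {T τ : ℝ}

theorem LPfeasible.card_mul_le {n : α → ℝ} (h : LPfeasible TS T τ n) (s : Finset α) :
    s.card * τ ≤ ∑ a ∈ s, TS a + T := by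
  obtain ⟨-, hn, hsum, hτ⟩ := h
  have hs : ∑ a ∈ s, n a ≤ T :=
    hsum ▸ Finset.sum_le_univ_sum_of_nonneg hn
  calc s.card * τ = ∑ _a ∈ s, τ := by rw [Finset.sum_const, nsmul_eq_mul]
    _ ≤ ∑ a ∈ s, (TS a + n a) := Finset.sum_le_sum fun a _ => hτ a
    _ ≤ ∑ a ∈ s, TS a + T := by rw [Finset.sum_add_distrib]; linarith

theorem lpfeasible_fill (hτ : 0 ≤ τ) (hT : ∑ a, max (τ - TS a) 0 = T) :
    LPfeasible TS T τ fun a => max (τ - TS a) 0 :=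
  ⟨hτ, fun _ => le_max_right _ _, hT, fun a => by linarith [le_max_left (τ - TS a) 0]⟩

theorem isGreatest_lp_of_fill {s : Finset α} (hs : s.Nonempty) (hτ : 0 ≤ τ)
    (hT : ∑ a, max (τ - TS a) 0 = T) (hbound : s.card * τ = ∑ a ∈ s, TS a + T) :
    IsGreatest {τ : ℝ | ∃ n : α → ℝ, LPfeasible TS T τ n} τ := by
  refine ⟨⟨_, lpfeasible_fill hτ hT⟩, ?_⟩
  rintro σ ⟨n, hn⟩
  have hcard : (0 : ℝ) < s.card := by exact_mod_cast hs.card_pos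
  exact le_of_mul_le_mul_left (hbound ▸ hn.card_mul_le s) hcard

end LP

theorem Finset.sum_ite_mem_univ {α R : Type*} [Fintype α] [DecidableEq α] [Ring R]
    (s : Finset α) (x y : R) :
    ∑ a, (if a ∈ s then x else y) = s.card * x + (Fintype.card α - s.card) * y := by
  rw [← Finset.sum_add_sum_compl s, Finset.sum_ite_of_true (fun _ h => h),
    Finset.sum_ite_of_false (fun _ h => Finset.mem_compl.mp h), Finset.sum_const,
    Finset.sum_const, Finset.card_compl, nsmul_eq_mul, nsmul_eq_mul, Nat.cast_sub s.card_le_univ]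

theorem lp_optimum_two_group_case_general
    {α : Type*} [Fintype α] [DecidableEq α]
    (K K₀ : ℕ) (hK : Fintype.card α = K)
    (A₀ : Finset α) (hA₀ : A₀.card = K₀) (hK₀K : K₀ < K)
    (c T : ℝ) (hc : 0 < c) (hT : 0 < T) :
    IsGreatest
      {τ : ℝ | ∃ n : α → ℝ, LPfeasible (fun a => if a ∈ A₀ then c else 0) T τ n}
      (if c * ((K : ℝ) - (K₀ : ℝ)) > T then T / ((K : ℝ) - (K₀ : ℝ))
        else (T + c * (K₀ : ℝ)) / (K : ℝ)) := by
  have hK₀K' : (K₀ : ℝ) < K := by exact_mod_cast hK₀K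
  have hfill (τ : ℝ) : ∑ a, max (τ - if a ∈ A₀ then c else 0) 0
      = K₀ * max (τ - c) 0 + (K - K₀) * max τ 0 := by
    rw [← hA₀, ← hK, ← Finset.sum_ite_mem_univ]
    exact Finset.sum_congr rfl fun a _ => by split_ifs <;> simp
  split_ifs with h
  · have hm : (0 : ℝ) < K - K₀ := sub_pos.mpr hK₀K'
    have hτc : T / (K - K₀) < c := (div_lt_iff₀ hm).mpr h
    have hcard : ((A₀ᶜ).card : ℝ) = K - K₀ := by
      rw [Finset.card_compl, hA₀, hK, Nat.cast_sub hK₀K.le]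
    refine isGreatest_lp_of_fill (s := A₀ᶜ) ?_ ?_ ?_ ?_
    · exact Finset.card_pos.mp (by rw [Finset.card_compl, hA₀, hK]; omega)
    · positivity
    · rw [hfill, max_eq_right (by linarith), max_eq_left (by positivity), mul_zero, zero_add,
        mul_div_cancel₀ _ hm.ne']
    · rw [Finset.sum_ite_of_false fun _ h => Finset.mem_compl.mp h, Finset.sum_const_zero,
        hcard, zero_add, mul_div_cancel₀ _ hm.ne']
  · have hKpos : (0 : ℝ) < K := by exact_mod_cast (Nat.zero_le K₀).trans_lt hK₀K
    have hcτ : c ≤ (T + c * K₀) / K := (le_div_iff₀ hKpos).mpr (by linarith)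
    refine isGreatest_lp_of_fill (s := Finset.univ) ?_ ?_ ?_ ?_
    · exact Finset.card_pos.mp (by rw [Finset.card_univ, hK]; omega)
    · positivity
    · rw [hfill, max_eq_left (by linarith), max_eq_left (by linarith)]
      field_simp
      ring
    · rw [Finset.sum_ite_mem_univ, Finset.card_univ, hA₀, hK]
      field_simp
      ring

/-- Closed form of the LP optimum in the two-group case: `K₀` arms have offline sample size
`c > 0` and the remaining `K - K₀` arms have none. -/
theorem lp_optimum_two_group_case
    {α : Type*} [Fintype α] [DecidableEq α]
    (K K₀ : ℕ) (hK : Fintype.card α = K)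
    (A₀ : Finset α) (hA₀ : A₀.card = K₀) (hK₀pos : 0 < K₀) (hK₀K : K₀ < K)
    (c T : ℝ) (hc : 0 < c) (hT : 0 < T) :
    IsGreatest
      {τ : ℝ | ∃ n : α → ℝ, LPfeasible (fun a => if a ∈ A₀ then c else 0) T τ n}
      (if c * ((K : ℝ) - (K₀ : ℝ)) > T then T / ((K : ℝ) - (K₀ : ℝ))
        else (T + c * (K₀ : ℝ)) / (K : ℝ)) :=
  lp_optimum_two_group_case_general K K₀ hK A₀ hA₀ hK₀K c T hc hT
end

section
/- Let m ≥ 1 be a natural number and let {αᵢ}_{i≥1} and {βᵢ}_{i≥0} be real sequences with αᵢ > 0 for all i, 4 ≥ α₁ > 1 > α₂ ≥ α₃ ≥ ⋯, 1 = β₀ ≥ β₁ ≥ β₂ ≥ ⋯ ≥ 0, lim_{i→∞} αᵢ = lim_{i→∞} βᵢ = 0, and ∑_{i=1}^{∞} (β_{i−1} − βᵢ)/√αᵢ ≤ 1. Let à be a finite set with |Ã| ≤ m, let Δ > 0 and L > 0, and let N, T_S, ω : à → ℝ with N(a) > 0, T_S(a) ≥ 0 and ω(a) ≥ 0 for all a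 ∈ Ã. For i ≥ 1 and a ∈ à define W_{i,a} := 16·αᵢ·(m²/Δ²)·L − T_S(a)·(max(1 − m·√αᵢ·ω(a)/Δ, 0))². If Δ ≤ ∑_{a∈Ã} min{ 2·√(2L/N(a)), 2·√(2L/(N(a) + T_S(a))) + T_S(a)·ω(a)/(N(a) + T_S(a)) }, then there exists i ≥ 1 such that for every j with 1 ≤ j < i fewer than βⱼ·m elements a ∈ à satisfy N(a) ≤ W_{j,a}, and at least βᵢ·m elements a ∈ à satisfy N(a) ≤ W_{i,a}. -/
/-!
Suppose that for every `i ≥ 1` fewer than `β i * m` arms satisfy `N a ≤ W i a`. Since `α i → 0`,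
every arm `a` has a first index `i_a` with `W i_a a < N a`, and escaping at level `i` bounds the
arm's confidence width by `Δ / (m √α_i)`; hence `Δ < (Δ / m) ∑ₐ α_{i_a}^{-1/2}`. On the other hand
fewer than `β i * m` arms have `i_a > i`, so summation by parts against the increasing weights
`α_i^{-1/2}` gives `∑ₐ α_{i_a}^{-1/2} ≤ m ∑ᵢ (β i - β (i+1)) / √α_{i+1} ≤ m`, a contradiction.
-/

open scoped Classical
open Filter Topology Finset

theorem Antitone.hasSum_sub_succ {β : ℕ → ℝ} (hβ : Antitone β) (hlim : Tendsto β atTop (𝓝 0)) :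
    HasSum (fun i ↦ β i - β (i + 1)) (β 0) := by
  rw [hasSum_iff_tendsto_nat_of_nonneg fun i ↦ sub_nonneg.2 (hβ i.le_succ)]
  simp_rw [sum_range_sub']
  simpa using tendsto_const_nhds.sub hlim

section LayerCake

variable {ι : Type*} {s : Finset ι} {f : ι → ℕ} {g β : ℕ → ℝ}

theorem sum_comp_eq_card_mul_add_sum {J : ℕ} (hf : ∀ a ∈ s, 1 ≤ f a ∧ f a ≤ J) :
    ∑ a ∈ s, g (f a) =
      #s * g 1 + ∑ i ∈ Ico 1 J, (#{a ∈ s | i < f a} : ℝ) * (g (i + 1) - g i) := by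
  have hpoint : ∀ a ∈ s,
      g (f a) = g 1 + ∑ i ∈ Ico 1 J, if i < f a then g (i + 1) - g i else 0 := by
    intro a ha
    have hfilter : {i ∈ Ico 1 J | i < f a} = Ico 1 (f a) := by
      ext i
      simp only [mem_filter, mem_Ico]
      have := hf a ha
      omega
    rw [← sum_filter, hfilter, sum_Ico_sub g (hf a ha).1]
    ring
  rw [sum_congr rfl hpoint, sum_add_distrib, sum_const, nsmul_eq_mul, sum_comm]
  congr 1
  refine sum_congr rfl fun i _ ↦ ?_
  rw [← sum_filter, sum_const, nsmul_eq_mul]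

theorem sum_range_sub_mul_add_eq (g β : ℕ → ℝ) {K : ℕ} (hK : 1 ≤ K) :
    ∑ i ∈ range K, (β i - β (i + 1)) * g (i + 1) + β K * g K =
      β 0 * g 1 + ∑ i ∈ Ico 1 K, β i * (g (i + 1) - g i) := by
  induction K, hK using Nat.le_induction with
  | base => simp; ring
  | succ n hn ih =>
    rw [sum_range_succ, sum_Ico_succ_top hn]
    linarith

theorem mul_le_tsum_nat_add (hβ : Antitone β) (hlim : Tendsto β atTop (𝓝 0))
    (hsum : Summable fun i ↦ (β i - β (i + 1)) * g (i + 1)) {K : ℕ}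
    (hg : ∀ i, K ≤ i → g K ≤ g (i + 1)) :
    β K * g K ≤ ∑' i, (β (i + K) - β (i + K + 1)) * g (i + K + 1) := by
  have htel : HasSum (fun i ↦ (β (i + K) - β (i + K + 1)) * g K) (β K * g K) := by
    simpa [Nat.add_right_comm] using ((hβ.comp_monotone (monotone_id.add_const K)).hasSum_sub_succ
      (hlim.comp (tendsto_add_atTop_nat K))).mul_right (g K)
  refine htel.tsum_eq ▸ htel.summable.tsum_le_tsum (fun i ↦ ?_) ((summable_nat_add_iff K).2 hsum)
  exact mul_le_mul_of_nonneg_left (hg _ (by omega)) (sub_nonneg.2 (hβ (by omega)))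

theorem sum_mul_sub_le_tsum (hβ : Antitone β) (hlim : Tendsto β atTop (𝓝 0))
    (hg : MonotoneOn g (Set.Ici 1)) (hsum : Summable fun i ↦ (β i - β (i + 1)) * g (i + 1))
    {K : ℕ} (hK : 1 ≤ K) :
    β 0 * g 1 + ∑ i ∈ Ico 1 K, β i * (g (i + 1) - g i) ≤
      ∑' i, (β i - β (i + 1)) * g (i + 1) := by
  have htail := mul_le_tsum_nat_add hβ hlim hsum fun i hi ↦
    hg (Set.mem_Ici.2 hK) (Set.mem_Ici.2 (by omega)) (by omega)
  rw [← sum_range_sub_mul_add_eq g β hK, ← hsum.sum_add_tsum_nat_add K]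
  linarith

theorem sum_comp_le_mul_tsum {c : ℝ} (hc : 0 ≤ c) (hf : ∀ a ∈ s, 1 ≤ f a)
    (hg : MonotoneOn g (Set.Ici 1)) (hg1 : 0 ≤ g 1) (hβ : Antitone β)
    (hlim : Tendsto β atTop (𝓝 0)) (hsum : Summable fun i ↦ (β i - β (i + 1)) * g (i + 1))
    (hcard : (#s : ℝ) ≤ β 0 * c) (hcount : ∀ i, 1 ≤ i → (#{a ∈ s | i < f a} : ℝ) ≤ β i * c) :
    ∑ a ∈ s, g (f a) ≤ c * ∑' i, (β i - β (i + 1)) * g (i + 1) := by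
  set J := s.sup f + 1
  have hJ : 1 ≤ J := by omega
  rw [sum_comp_eq_card_mul_add_sum fun a ha ↦ ⟨hf a ha, (le_sup ha).trans (s.sup f).le_succ⟩]
  calc (#s : ℝ) * g 1 + ∑ i ∈ Ico 1 J, (#{a ∈ s | i < f a} : ℝ) * (g (i + 1) - g i)
      ≤ β 0 * c * g 1 + ∑ i ∈ Ico 1 J, β i * c * (g (i + 1) - g i) := by
        gcongr with i hi
        · exact sub_nonneg.2 (hg (Set.mem_Ici.2 (mem_Ico.1 hi).1)
            (Set.mem_Ici.2 (Nat.le_add_left 1 i)) (by omega))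
        · exact hcount i (mem_Ico.1 hi).1
    _ = c * (β 0 * g 1 + ∑ i ∈ Ico 1 J, β i * (g (i + 1) - g i)) := by
        rw [mul_add, mul_sum]; congr 1 <;> [ring; exact sum_congr rfl fun _ _ ↦ by ring]
    _ ≤ c * ∑' i, (β i - β (i + 1)) * g (i + 1) := by
        gcongr; exact sum_mul_sub_le_tsum hβ hlim hg hsum hJ

end LayerCake

theorem two_mul_sqrt_div_lt {L n y : ℝ} (hn : 0 < n) (hy : 0 < y) (h : 8 * L < n * y ^ 2) :
    2 * √(2 * L / n) < y := by
  have : √(2 * L / n) < y / 2 := by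
    rw [Real.sqrt_lt' (by positivity), div_lt_iff₀ hn]
    linarith
  linarith

theorem min_confidence_width_lt {Δ r n t w : ℝ} (L : ℝ) (hΔ : 0 < Δ) (hr : 0 < r) (hn : 0 < n)
    (ht : 0 ≤ t) (hw : 0 ≤ w)
    (h : 16 * r ^ 2 * L / Δ ^ 2 - t * (max (1 - r * w / Δ) 0) ^ 2 < n) :
    min (2 * √(2 * L / n)) (2 * √(2 * L / (n + t)) + t * w / (n + t)) < Δ / r := by
  set x := max (1 - r * w / Δ) 0
  have hscaled : 16 * r ^ 2 * L - t * x ^ 2 * Δ ^ 2 < n * Δ ^ 2 := by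
    have := mul_lt_mul_of_pos_right h (pow_pos hΔ 2)
    field_simp at this
    linarith
  rcases lt_or_ge (8 * L * r ^ 2) (n * Δ ^ 2) with hsmall | hlarge
  · refine min_lt_of_left_lt (two_mul_sqrt_div_lt hn (by positivity) ?_)
    rw [div_pow, mul_div_assoc', lt_div_iff₀ (by positivity)]
    linarith
  · have hx : 0 < x := by
      by_contra! hx
      have : x = 0 := le_antisymm hx (le_max_right _ _)
      simp only [this] at hscaled
      nlinarith [mul_pos hn (pow_pos hΔ 2)]
    have hxeq : x * Δ / r = Δ / r - w := by
      have hpos : 0 < 1 - r * w / Δ := by simpa using lt_max_iff.1 hx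
      rw [show x = 1 - r * w / Δ from max_eq_left hpos.le]
      field_simp
    have hS : 0 < n + t := by linarith
    have hwidth : 2 * √(2 * L / (n + t)) < x * Δ / r := by
      refine two_mul_sqrt_div_lt hS (by positivity) ?_
      rw [div_pow, mul_pow, mul_div_assoc', lt_div_iff₀ (by positivity)]
      nlinarith [mul_nonneg hn.le (sq_nonneg (x * Δ))]
    have hbias : t * w / (n + t) ≤ w := by
      rw [div_le_iff₀ hS]
      nlinarith
    exact min_lt_of_right_lt (by linarith)

theorem exists_least_one_le {P : ℕ → Prop} (h : ∃ i, 1 ≤ i ∧ P i) :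
    ∃ i, 1 ≤ i ∧ P i ∧ ∀ j, 1 ≤ j → j < i → ¬P j :=
  ⟨Nat.find h, (Nat.find_spec h).1, (Nat.find_spec h).2,
    fun _ hj hlt hP ↦ Nat.find_min h hlt ⟨hj, hP⟩⟩

theorem monotoneOn_inv_sqrt {α : ℕ → ℝ} (hpos : ∀ i, 1 ≤ i → 0 < α i)
    (hanti : ∀ i, 1 ≤ i → α (i + 1) ≤ α i) : MonotoneOn (fun i ↦ (√(α i))⁻¹) (Set.Ici 1) :=
  monotone_add_nat_iff_monotoneOn_nat_Ici.1 <| monotone_nat_of_le_succ fun i ↦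
    inv_anti₀ (Real.sqrt_pos.2 (hpos _ (by omega))) (Real.sqrt_le_sqrt (hanti _ (by omega)))

theorem exists_one_le_mul_sub_lt {α : ℕ → ℝ} (hα : Tendsto α atTop (𝓝 0)) (C t : ℝ)
    (x : ℕ → ℝ) (ht : 0 ≤ t) {n : ℝ} (hn : 0 < n) : ∃ i, 1 ≤ i ∧ C * α i - t * x i ^ 2 < n := by
  have hlim : Tendsto (fun i ↦ C * α i) atTop (𝓝 0) := by simpa using hα.const_mul C
  obtain ⟨i, hi, hlt⟩ := ((eventually_ge_atTop 1).and (hlim.eventually_lt_const hn)).exists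
  exact ⟨i, hi, by nlinarith [mul_nonneg ht (sq_nonneg (x i))]⟩

theorem covering_lemma_general
    {σ : Type*} (m : ℕ) (hm : 1 ≤ m)
    (α β : ℕ → ℝ)
    (hαpos : ∀ i, 1 ≤ i → 0 < α i)
    (hα1' : 1 < α 1) (hα2 : α 2 < 1)
    (hαmono : ∀ i, 2 ≤ i → α (i + 1) ≤ α i)
    (hβ0 : β 0 = 1) (hβmono : ∀ i, β (i + 1) ≤ β i)
    (hαlim : Filter.Tendsto α Filter.atTop (nhds 0))
    (hβlim : Filter.Tendsto β Filter.atTop (nhds 0))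
    (hsummable : Summable (fun i : ℕ => (β i - β (i + 1)) / Real.sqrt (α (i + 1))))
    (hsum : (∑' i : ℕ, (β i - β (i + 1)) / Real.sqrt (α (i + 1))) ≤ 1)
    (Atil : Finset σ) (hAcard : Atil.card ≤ m)
    (Δ L : ℝ) (hΔ : 0 < Δ)
    (N TS ω : σ → ℝ)
    (hNpos : ∀ a ∈ Atil, 0 < N a)
    (hTSnonneg : ∀ a ∈ Atil, 0 ≤ TS a)
    (hωnonneg : ∀ a ∈ Atil, 0 ≤ ω a)
    (W : ℕ → σ → ℝ)
    (hW : ∀ i a, W i a = 16 * α i * ((m : ℝ) ^ 2 / Δ ^ 2) * L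
        - TS a * (max (1 - (m : ℝ) * Real.sqrt (α i) * ω a / Δ) 0) ^ 2)
    (hgap : Δ ≤ ∑ a ∈ Atil,
        min (2 * Real.sqrt (2 * L / N a))
          (2 * Real.sqrt (2 * L / (N a + TS a)) + TS a * ω a / (N a + TS a))) :
    ∃ i, 1 ≤ i ∧
      (∀ j, 1 ≤ j → j < i →
        ((Atil.filter (fun a => N a ≤ W j a)).card : ℝ) < β j * (m : ℝ)) ∧
      β i * (m : ℝ) ≤ ((Atil.filter (fun a => N a ≤ W i a)).card : ℝ) := by
  suffices hex : ∃ i, 1 ≤ i ∧ β i * m ≤ (#{a ∈ Atil | N a ≤ W i a} : ℝ) by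
    obtain ⟨i, hi, hcover, hfirst⟩ := exists_least_one_le hex
    exact ⟨i, hi, fun j hj hji ↦ not_le.1 (hfirst j hj hji), hcover⟩
  by_contra! hfew
  have hmR : (0 : ℝ) < m := by exact_mod_cast hm
  have hescape : ∀ a ∈ Atil, ∃ i, 1 ≤ i ∧ W i a < N a := fun a ha ↦ by
    obtain ⟨i, hi, hlt⟩ := exists_one_le_mul_sub_lt hαlim (16 * ((m : ℝ) ^ 2 / Δ ^ 2) * L) (TS a)
      (fun i ↦ max (1 - m * √(α i) * ω a / Δ) 0) (hTSnonneg a ha) (hNpos a ha)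
    exact ⟨i, hi, by rw [hW]; linarith⟩
  choose! ia hia1 hia hbefore using fun a ha ↦ exists_least_one_le (hescape a ha)
  set g : ℕ → ℝ := fun i ↦ (√(α i))⁻¹
  have hgmono : MonotoneOn g (Set.Ici 1) := monotoneOn_inv_sqrt hαpos fun i hi ↦ by
    rcases hi.eq_or_lt with rfl | hi
    · linarith
    · exact hαmono i hi
  have hcount : ∀ i, 1 ≤ i → (#{a ∈ Atil | i < ia a} : ℝ) ≤ β i * m := fun i hi ↦ by
    refine le_trans ?_ (hfew i hi).le
    exact_mod_cast card_le_card fun a ha ↦ by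
      simp only [mem_filter] at ha ⊢
      exact ⟨ha.1, not_lt.1 (hbefore a ha.1 i hi ha.2)⟩
  have hbound : ∑ a ∈ Atil, g (ia a) ≤ m :=
    (sum_comp_le_mul_tsum hmR.le hia1 hgmono (by positivity) (antitone_nat_of_succ_le hβmono)
      hβlim (by simpa [g, div_eq_mul_inv] using hsummable) (by simpa [hβ0] using hAcard) hcount).trans
      (mul_le_of_le_one_right hmR.le (by simpa [g, div_eq_mul_inv] using hsum))
  have hne : Atil.Nonempty := nonempty_of_sum_ne_zero (hΔ.trans_le hgap).ne'
  have hwidth : ∀ a ∈ Atil,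
      min (2 * √(2 * L / N a)) (2 * √(2 * L / (N a + TS a)) + TS a * ω a / (N a + TS a)) <
        Δ / m * g (ia a) := by
    intro a ha
    have hαa := hαpos _ (hia1 a ha)
    have h := hia a ha
    rw [hW] at h
    calc _ < Δ / (m * √(α (ia a))) :=
          min_confidence_width_lt L hΔ (by positivity) (hNpos a ha) (hTSnonneg a ha)
            (hωnonneg a ha) (by convert h using 2; rw [mul_pow, Real.sq_sqrt hαa.le]; ring)
      _ = Δ / m * g (ia a) := by rw [div_mul_eq_div_div, div_eq_mul_inv]
  exact lt_irrefl Δ <| calc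
    Δ ≤ _ := hgap
    _ < ∑ a ∈ Atil, Δ / m * g (ia a) := sum_lt_sum_of_nonempty hne hwidth
    _ ≤ Δ / m * m := by rw [← mul_sum]; gcongr
    _ = Δ := div_mul_cancel₀ Δ hmR.ne'

/-- Covering lemma in the instance-dependent regret analysis of MIN-COMB-UCB. -/
theorem covering_lemma
    {σ : Type*} (m : ℕ) (hm : 1 ≤ m)
    (α β : ℕ → ℝ)
    (hαpos : ∀ i, 1 ≤ i → 0 < α i)
    (hα1 : α 1 ≤ 4) (hα1' : 1 < α 1) (hα2 : α 2 < 1)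
    (hαmono : ∀ i, 2 ≤ i → α (i + 1) ≤ α i)
    (hβ0 : β 0 = 1) (hβmono : ∀ i, β (i + 1) ≤ β i) (hβnonneg : ∀ i, 0 ≤ β i)
    (hαlim : Filter.Tendsto α Filter.atTop (nhds 0))
    (hβlim : Filter.Tendsto β Filter.atTop (nhds 0))
    (hsummable : Summable (fun i : ℕ => (β i - β (i + 1)) / Real.sqrt (α (i + 1))))
    (hsum : (∑' i : ℕ, (β i - β (i + 1)) / Real.sqrt (α (i + 1))) ≤ 1)
    (Atil : Finset σ) (hAcard : Atil.card ≤ m)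
    (Δ L : ℝ) (hΔ : 0 < Δ) (hL : 0 < L)
    (N TS ω : σ → ℝ)
    (hNpos : ∀ a ∈ Atil, 0 < N a)
    (hTSnonneg : ∀ a ∈ Atil, 0 ≤ TS a)
    (hωnonneg : ∀ a ∈ Atil, 0 ≤ ω a)
    (W : ℕ → σ → ℝ)
    (hW : ∀ i a, W i a = 16 * α i * ((m : ℝ) ^ 2 / Δ ^ 2) * L
        - TS a * (max (1 - (m : ℝ) * Real.sqrt (α i) * ω a / Δ) 0) ^ 2)
    (hgap : Δ ≤ ∑ a ∈ Atil,
        min (2 * Real.sqrt (2 * L / N a))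
          (2 * Real.sqrt (2 * L / (N a + TS a)) + TS a * ω a / (N a + TS a))) :
    ∃ i, 1 ≤ i ∧
      (∀ j, 1 ≤ j → j < i →
        ((Atil.filter (fun a => N a ≤ W j a)).card : ℝ) < β j * (m : ℝ)) ∧
      β i * (m : ℝ) ≤ ((Atil.filter (fun a => N a ≤ W i a)).card : ℝ) :=
  covering_lemma_general m hm α β hαpos hα1' hα2 hαmono hβ0 hβmono hαlim hβlim hsummable hsum Atil
    hAcard Δ L hΔ N TS ω hNpos hTSnonneg hωnonneg W hW hgap
end

section
/- Let L > 0, Δ > 0, α > 0, ω ≥ 0, T_S ≥ 0 and N > 0 be real numbers and m ≥ 1 a natural number. If N > 16·α·(m²/Δ²)·L − T_S·(max(1 − m·√α·ω/Δ, 0))², then min{ 2·√(2L/N), 2·√(2L/(N + T_S)) + T_S·ω/(N + T_S) } < Δ/(m·√α). -/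
set_option maxHeartbeats 1000000 in
/-- Per-base-arm radius inequality: key step in the covering lemma for MIN-COMB-UCB. -/
theorem per_base_arm_radius_bound
    (L Δ α ω TS N : ℝ) (m : ℕ) (hm : 1 ≤ m)
    (hL : 0 < L) (hΔ : 0 < Δ) (hα : 0 < α) (hω : 0 ≤ ω) (hTS : 0 ≤ TS) (hN : 0 < N)
    (h : N > 16 * α * ((m : ℝ) ^ 2 / Δ ^ 2) * L
        - TS * (max (1 - (m : ℝ) * Real.sqrt α * ω / Δ) 0) ^ 2) :
    min (2 * Real.sqrt (2 * L / N))
        (2 * Real.sqrt (2 * L / (N + TS)) + TS * ω / (N + TS))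
      < Δ / ((m : ℝ) * Real.sqrt α) := by
  have hm1 : (1:ℝ) ≤ (m:ℝ) := by exact_mod_cast hm
  have hm0 : (0:ℝ) < (m:ℝ) := by linarith
  set s := Real.sqrt α with hsdef
  have hs : 0 < s := Real.sqrt_pos.2 hα
  have hs2 : s ^ 2 = α := Real.sq_sqrt hα.le
  set c := Δ / ((m:ℝ) * s) with hcdef
  have hc : 0 < c := div_pos hΔ (mul_pos hm0 hs)
  have hc2 : c ^ 2 = Δ ^ 2 / ((m:ℝ) ^ 2 * α) := by
    rw [hcdef, div_pow, mul_pow, hs2]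
  have hc2' : c ^ 2 * ((m:ℝ) ^ 2 * α) = Δ ^ 2 := by
    rw [hc2]; field_simp
  -- rewrite the threshold using c
  have hcoef : 16 * α * ((m : ℝ) ^ 2 / Δ ^ 2) * L = 8 * L / c ^ 2 * 2 := by
    have hΔ2 : Δ ^ 2 ≠ 0 := by positivity
    have hc2ne : c ^ 2 ≠ 0 := by positivity
    field_simp
    nlinarith [hc2']
  by_cases hA : 8 * L / c ^ 2 < N
  · -- use the first term
    apply lt_of_le_of_lt (min_le_left _ _)
    have key : Real.sqrt (2 * L / N) < c / 2 := by
      rw [Real.sqrt_lt' (by linarith)]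
      rw [div_lt_iff₀ hN] at *
      have h8 : 8 * L < N * c ^ 2 := by
        have := (div_lt_iff₀ (by positivity : (0:ℝ) < c ^ 2)).1 hA
        nlinarith
      nlinarith
    linarith
  · -- use the second term
    push_neg at hA
    have hNc : N * c ^ 2 ≤ 8 * L := by
      have := (le_div_iff₀ (by positivity : (0:ℝ) < c ^ 2)).1 hA
      linarith
    set M := max (1 - (m : ℝ) * s * ω / Δ) 0 with hMdef
    have hMnn : 0 ≤ M := le_max_right _ _
    have hTM : TS * M ^ 2 > 8 * L / c ^ 2 := by
      rw [hcoef] at h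
      linarith
    have hLc : 0 < 8 * L / c ^ 2 := by positivity
    have hMpos : 0 < M := by
      rcases eq_or_lt_of_le hMnn with he | hl
      · exfalso; rw [← he] at hTM; simp at hTM; linarith
      · exact hl
    have hX : 0 < 1 - (m : ℝ) * s * ω / Δ := by
      by_contra hcon
      push_neg at hcon
      have : M = 0 := by rw [hMdef, max_eq_right hcon]
      linarith
    have hMX : M = 1 - (m : ℝ) * s * ω / Δ := max_eq_left hX.le
    -- relate to d = c - ω
    have hωc : (m : ℝ) * s * ω / Δ = ω / c := by
      rw [hcdef]
      field_simp
    set d := c - ω with hddef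
    have hMd : M = d / c := by
      rw [hMX, hωc, hddef]
      field_simp
    have hd : 0 < d := by
      rw [hMd] at hMpos
      have := mul_pos hMpos hc
      rwa [div_mul_cancel₀ _ hc.ne'] at this
    have hdc : d ≤ c := by rw [hddef]; linarith
    have hTd : 8 * L < TS * d ^ 2 := by
      rw [hMd] at hTM
      have : TS * (d / c) ^ 2 * c ^ 2 > 8 * L / c ^ 2 * c ^ 2 := by
        apply mul_lt_mul_of_pos_right hTM (by positivity)
      have hc2ne : (c:ℝ) ^ 2 ≠ 0 := by positivity
      rw [mul_assoc] at this
      have h2 : TS * ((d / c) ^ 2 * c ^ 2) = TS * d ^ 2 := by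
        field_simp
      have h3 : 8 * L / c ^ 2 * c ^ 2 = 8 * L := div_mul_cancel₀ _ hc2ne
      rw [h2, h3] at this
      exact this
    clear_value s c M d
    have hTSd2 : 0 < TS * d ^ 2 := by linarith
    have hTSpos : 0 < TS := by
      rcases mul_pos_iff.1 hTSd2 with ⟨h1, _⟩ | ⟨_, h2⟩
      · exact h1
      · exact absurd h2 (not_lt.2 (sq_nonneg d))
    have hK : 0 < N + TS := by linarith
    have key2 : 8 * L * (N + TS) < (c * N + TS * d) ^ 2 := by
      nlinarith [mul_lt_mul_of_pos_right hTd hN, mul_lt_mul_of_pos_right hTd hTSpos,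
        mul_nonneg (mul_nonneg (mul_nonneg hTSpos.le hd.le) hN.le)
          (by linarith : (0:ℝ) ≤ 2 * c - d),
        mul_pos (mul_pos hc hN) (mul_pos hc hN)]
    apply lt_of_le_of_lt (min_le_right _ _)
    have hRpos : 0 < (c * N + TS * d) / (2 * (N + TS)) := by positivity
    have key : Real.sqrt (2 * L / (N + TS)) < (c * N + TS * d) / (2 * (N + TS)) := by
      rw [Real.sqrt_lt' hRpos, div_pow, div_lt_div_iff₀ hK (by positivity)]
      nlinarith [mul_lt_mul_of_pos_right key2 hK]
    have heq : (c * N + TS * d) / (N + TS) = c - TS * ω / (N + TS) := by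
      rw [hddef]; field_simp; ring
    have h2K : (c * N + TS * d) / (2 * (N + TS)) = ((c * N + TS * d) / (N + TS)) / 2 := by
      rw [div_div, mul_comm (N + TS) 2]
    rw [h2K, heq] at key
    linarith [key]
end

section
/- Let m ≥ 1 and J ≥ 1 be natural numbers, set K = m·J, let T_{S,1}, …, T_{S,J} ≥ 0 and T > 0 be real numbers. Consider the path LP over arm set {1, …, J} with sample sizes (T_{S,j}) and budget T, and the combinatorial LP over arm set {1, …, K} with sample sizes T_S(ℓ + (j−1)·m) = T_{S,j} for ℓ ∈ {1, …, m}, j ∈ {1, …, J}, and budget m·T. If (τ, (n_j)_{j=1}^{J}) is feasible for the path LP, then (τ, n′) with n′(ℓ + (j−1)·m) = n_j for all ℓ ∈ {1, …, m}, j ∈ {1, …, J} is feasible for the combinatorial LP. Consequently, if τ′* is an optimal value of the path LP and τ*^C is an optimal value of the combinatorial LP, then τ′* ≤ τ*^C. -/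
lemma lift_sum (m J : ℕ) (hm : 0 < m) (g : Fin J → ℝ) :
    ∑ k : Fin (m * J), g ⟨(k : ℕ) / m, Nat.div_lt_of_lt_mul k.isLt⟩ = (m : ℝ) * ∑ j, g j := by
  rw [← Fintype.sum_equiv (finProdFinEquiv.trans (finCongr (Nat.mul_comm J m)))
      (fun p : Fin J × Fin m => g p.1)
      (fun k => g ⟨(k : ℕ) / m, Nat.div_lt_of_lt_mul k.isLt⟩)]
  · rw [Fintype.sum_prod_type, Finset.mul_sum]
    refine Finset.sum_congr rfl fun j _ => ?_
    simp [mul_comm]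
  · intro p
    congr 1
    ext
    show (p.1 : ℕ) = ((p.2 : ℕ) + m * p.1) / m
    rw [Nat.add_mul_div_left _ _ hm, Nat.div_eq_of_lt p.2.isLt, Nat.zero_add]

/-- Comparison between the path LP (budget `T` over `J` path-arms) and the combinatorial LP
(budget `m·T` over `K = m·J` base arms, with sample sizes constant on each group of `m`):
any path-feasible pair lifts to a combinatorial-feasible pair, and consequently the path LP
optimum is at most the combinatorial LP optimum. -/
theorem path_lp_le_comb_lp
    (m J : ℕ) (hm : 1 ≤ m) (hJ : 1 ≤ J)
    (TSp : Fin J → ℝ) (hTSp : ∀ j, 0 ≤ TSp j) (T : ℝ) (hT : 0 < T) :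
    (∀ (τ : ℝ) (np : Fin J → ℝ), LPfeasible TSp T τ np →
      LPfeasible (fun k : Fin (m * J) => TSp ⟨(k : ℕ) / m, Nat.div_lt_of_lt_mul k.isLt⟩)
        ((m : ℝ) * T) τ
        (fun k : Fin (m * J) => np ⟨(k : ℕ) / m, Nat.div_lt_of_lt_mul k.isLt⟩)) ∧
    (∀ τps τcs : ℝ,
      IsGreatest {τ' : ℝ | ∃ n : Fin J → ℝ, LPfeasible TSp T τ' n} τps →
      IsGreatest {τ' : ℝ | ∃ n : Fin (m * J) → ℝ,
        LPfeasible (fun k : Fin (m * J) => TSp ⟨(k : ℕ) / m, Nat.div_lt_of_lt_mul k.isLt⟩)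
          ((m : ℝ) * T) τ' n} τcs →
      τps ≤ τcs) := by
  have hlift : ∀ (τ : ℝ) (np : Fin J → ℝ), LPfeasible TSp T τ np →
      LPfeasible (fun k : Fin (m * J) => TSp ⟨(k : ℕ) / m, Nat.div_lt_of_lt_mul k.isLt⟩)
        ((m : ℝ) * T) τ
        (fun k : Fin (m * J) => np ⟨(k : ℕ) / m, Nat.div_lt_of_lt_mul k.isLt⟩) := by
    rintro τ np ⟨h0, hn, hsum, hcon⟩
    refine ⟨h0, fun k => hn _, ?_, fun k => hcon _⟩
    rw [lift_sum m J hm, hsum]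
  refine ⟨hlift, fun τps τcs hps hcs => ?_⟩
  obtain ⟨⟨np, hfeas⟩, _⟩ := hps
  exact hcs.2 ⟨_, hlift τps np hfeas⟩
end
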